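/- For every N ∈ ℕ, every m ∈ ℕ, all a, b ∈ ℕ and all tuples c, d : Fin m → ℕ, composing with D_N(a,b) on the right satisfies the mirror normal-ordering recursion: V_N(c|d) ∘ D_N(a,b) = V_N(snoc c a | snoc d b) + ∑_{i : Fin m} δ_{a, d i} · V_N(c | update d i b), where snoc c a : Fin (m+1) → ℕ appends a to the tuple c, update d i b replaces the i-th entry of d by b, and δ_{x,y} = 1 if x = y and 0 otherwise. -/

import Mathlib

/-! Write `V_N(c|d) = ∑_e X_{c,e} ∂_{d,e}` and `D_N(a,b) = ∑_f X_{(a,f)} ∂_{(b,f)}`. Moving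
`X_{(a,f)}` to the left through the commuting derivatives `∂_{(d i, e i)}` leaves the normally
ordered product `X_{c,e} X_{(a,f)} ∂_{d,e} ∂_{(b,f)}`, a summand of `V_N(snoc c a | snoc d b)`, plus
one term for each `i` with `(d i, e i) = (a, f)`, in which `∂_{(d i, e i)}` is replaced by
`∂_{(b,f)} = ∂_{(b, e i)}`. Summing over `f` turns these into `δ_{a, d i} V_N(c | update d i b)`. -/

open MvPolynomial

noncomputable abbrev R : Type := MvPolynomial (ℕ × ℕ) ℂ

/-- The `gl(∞)` generator `D_N(a,b) p = ∑_{e<N} X_{(a,e)} ∂p/∂X_{(b,e)}`. -/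
noncomputable def Dop (N a b : ℕ) : R →ₗ[ℂ] R :=
  ∑ e ∈ Finset.range N,
    (LinearMap.mulLeft ℂ (X (a, e))) ∘ₗ (pderiv ((b, e) : ℕ × ℕ)).toLinearMap

/-- The normally ordered operator `V_N(a|b)`. -/
noncomputable def Vop (N : ℕ) {m : ℕ} (a b : Fin m → ℕ) : R →ₗ[ℂ] R :=
  ∑ e : Fin m → Fin N,
    (LinearMap.mulLeft ℂ (∏ i, X (a i, (e i : ℕ)))) ∘ₗ
      (List.ofFn fun i => (pderiv ((b i, (e i : ℕ)) : ℕ × ℕ)).toLinearMap).prod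

/-- The cut-and-join operator `W_N(σ) = ∑_a V_N(a | a∘σ)`. -/
noncomputable def Wop (N : ℕ) {m : ℕ} (σ : Equiv.Perm (Fin m)) : R →ₗ[ℂ] R :=
  ∑ a : Fin m → Fin N, Vop N (fun i => (a i : ℕ)) (fun i => (a (σ i) : ℕ))

/-- Compatibility of index tuples with a two-fold graph. -/
def Compatible {N m : ℕ} (α β : Fin m → ℕ) (a b : Fin m → Fin N) : Prop :=
  (∀ i j, a i = a j ↔ α i = α j) ∧ (∀ i j, b i = b j ↔ β i = β j)

instance {N m : ℕ} (α β : Fin m → ℕ) (a b : Fin m → Fin N) :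
    Decidable (Compatible α β a b) :=
  inferInstanceAs (Decidable (_ ∧ _))

/-- The unnormalized graph operator `Ṽ_N(α,β)`. -/
noncomputable def Vt (N : ℕ) {m : ℕ} (α β : Fin m → ℕ) : R →ₗ[ℂ] R :=
  ∑ p ∈ Finset.univ.filter
      (fun p : (Fin m → Fin N) × (Fin m → Fin N) => Compatible α β p.1 p.2),
    Vop N (fun i => (p.1 i : ℕ)) (fun i => (p.2 i : ℕ))

theorem List.prod_ofFn_mul_eq_mul_prod_ofFn_add {K A : Type*} [CommSemiring K] [Semiring A]
    [Algebra K A] {m : ℕ} (D : Fin m → A) (M : A) (γ : Fin m → K)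
    (h : ∀ j, D j * M = M * D j + γ j • 1) :
    (List.ofFn D).prod * M =
      M * (List.ofFn D).prod + ∑ i, γ i • (List.ofFn (Function.update D i 1)).prod := by
  induction m with
  | zero => simp
  | succ n ih =>
    induction D using Fin.consCases with
    | cons x D =>
    have hD := ih D (fun j => γ j.succ) (fun j => by simpa using h j.succ)
    have hx : x * M = M * x + γ 0 • 1 := by simpa using h 0
    simp only [List.ofFn_cons, List.prod_cons, Fin.sum_univ_succ, Fin.update_cons_zero,
      ← Fin.cons_update, mul_assoc, hD, mul_add, ← mul_assoc x M, hx, add_mul, Finset.mul_sum,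
      mul_smul_comm, smul_mul_assoc, one_mul]
    abel

theorem List.prod_ofFn_update_one_mul {A : Type*} [Monoid A] {m : ℕ} (D : Fin m → A) (B : A)
    (hB : ∀ j, Commute B (D j)) (i : Fin m) :
    (List.ofFn (Function.update D i 1)).prod * B = (List.ofFn (Function.update D i B)).prod := by
  induction m with
  | zero => exact i.elim0
  | succ n ih =>
    induction D using Fin.consCases with
    | cons x D =>
    induction i using Fin.cases with
    | zero =>
      have hB' : Commute B (List.ofFn D).prod :=
        Commute.list_prod_right _ _ fun y hy => by
          obtain ⟨j, rfl⟩ := List.mem_ofFn.mp hy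
          simpa using hB j.succ
      simp [Fin.update_cons_zero, hB'.eq]
    | succ j =>
      simp only [← Fin.cons_update, List.ofFn_cons, List.prod_cons, mul_assoc,
        ih D (fun k => by simpa using hB k.succ)]

theorem MvPolynomial.pderiv_pderiv_comm {σ S : Type*} [CommSemiring S] (u v : σ)
    (p : MvPolynomial σ S) : pderiv u (pderiv v p) = pderiv v (pderiv u p) := by
  classical
  induction p using MvPolynomial.induction_on with
  | C a => simp
  | add p q hp hq => simp [hp, hq]
  | mul_X p s hp =>
    simp only [pderiv_mul, map_add, hp, pderiv_X, Pi.single_apply]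
    split_ifs <;> simp [add_right_comm]

theorem MvPolynomial.commute_pderiv {σ S : Type*} [CommSemiring S] (u v : σ) :
    Commute ((pderiv u).toLinearMap : Module.End S (MvPolynomial σ S)) (pderiv v).toLinearMap :=
  LinearMap.ext (pderiv_pderiv_comm u v)

theorem MvPolynomial.pderiv_mul_mulLeft_X {σ S : Type*} [CommSemiring S] [DecidableEq σ]
    (u v : σ) :
    ((pderiv v).toLinearMap : Module.End S (MvPolynomial σ S)) * LinearMap.mulLeft S (X u) =
      LinearMap.mulLeft S (X u) * (pderiv v).toLinearMap + (if u = v then (1 : S) else 0) • 1 := by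
  refine LinearMap.ext fun p => ?_
  simp only [Module.End.mul_apply, LinearMap.add_apply, LinearMap.smul_apply,
    Module.End.one_apply, Derivation.coeFn_coe, LinearMap.mulLeft_apply, pderiv_mul, pderiv_X,
    Pi.single_apply]
  split_ifs with h
  · subst h
    simp [add_comm]
  · simp

/-- The summand of `Vop` at the index tuple `e`, taken in `ℕ` so that it can be extended by
`Fin.snoc` without a bound. -/
noncomputable def VopTerm {m : ℕ} (c d e : Fin m → ℕ) : Module.End ℂ R :=
  LinearMap.mulLeft ℂ (∏ i, X (c i, e i)) *
    (List.ofFn fun i => (pderiv ((d i, e i) : ℕ × ℕ)).toLinearMap).prod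

theorem Vop_eq_sum_VopTerm (N : ℕ) {m : ℕ} (c d : Fin m → ℕ) :
    Vop N c d = ∑ e : Fin m → Fin N, VopTerm c d (fun i => e i) :=
  rfl

theorem Dop_eq_sum_mulLeft_X_mul_pderiv (N a b : ℕ) :
    Dop N a b = ∑ f ∈ Finset.range N,
      LinearMap.mulLeft ℂ (X (a, f)) * (pderiv ((b, f) : ℕ × ℕ)).toLinearMap :=
  rfl

theorem VopTerm_mul_mulLeft_X_mul_pderiv {m : ℕ} (c d e : Fin m → ℕ) (a b f : ℕ) :
    VopTerm c d e * (LinearMap.mulLeft ℂ (X (a, f)) * (pderiv ((b, f) : ℕ × ℕ)).toLinearMap) =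
      VopTerm (Fin.snoc c a) (Fin.snoc d b) (Fin.snoc e f) +
        ∑ i, (if (a, f) = (d i, e i) then (1 : ℂ) else 0) • VopTerm c (Function.update d i b) e := by
  set P : Fin m → Module.End ℂ R := fun i => (pderiv ((d i, e i) : ℕ × ℕ)).toLinearMap
  have hcomm := List.prod_ofFn_mul_eq_mul_prod_ofFn_add P (LinearMap.mulLeft ℂ (X (a, f))) _
    fun i => pderiv_mul_mulLeft_X (a, f) (d i, e i)
  have hX : LinearMap.mulLeft ℂ (∏ i, (X (c i, e i) : R)) * LinearMap.mulLeft ℂ (X (a, f)) =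
      LinearMap.mulLeft ℂ
        (∏ i, X ((Fin.snoc c a : Fin (m + 1) → ℕ) i, (Fin.snoc e f : Fin (m + 1) → ℕ) i)) := by
    rw [Module.End.mul_eq_comp, ← LinearMap.mulLeft_mul, Fin.prod_univ_castSucc]
    simp
  have hsnoc : (List.ofFn P).prod * (pderiv ((b, f) : ℕ × ℕ)).toLinearMap =
      (List.ofFn fun i => (pderiv ((Fin.snoc d b : Fin (m + 1) → ℕ) i,
        (Fin.snoc e f : Fin (m + 1) → ℕ) i)).toLinearMap).prod := by
    rw [List.ofFn_succ', List.prod_concat]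
    simp [P]
  have hupdate : ∀ i, (a, f) = (d i, e i) →
      (List.ofFn (Function.update P i 1)).prod * (pderiv ((b, f) : ℕ × ℕ)).toLinearMap =
        (List.ofFn fun j =>
          (pderiv ((Function.update d i b j, e j) : ℕ × ℕ)).toLinearMap).prod := by
    rintro i ⟨-, rfl⟩
    rw [List.prod_ofFn_update_one_mul P _ (fun j => commute_pderiv _ _) i]
    congr 2
    funext j
    exact (Function.apply_update (fun j b => (pderiv ((b, e j) : ℕ × ℕ)).toLinearMap) d i b j).symm
  have hcorr : ∀ i, (if (a, f) = (d i, e i) then (1 : ℂ) else 0) •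
      (LinearMap.mulLeft ℂ (∏ i, (X (c i, e i) : R)) *
        ((List.ofFn (Function.update P i 1)).prod * (pderiv ((b, f) : ℕ × ℕ)).toLinearMap)) =
      (if (a, f) = (d i, e i) then (1 : ℂ) else 0) • VopTerm c (Function.update d i b) e := by
    intro i
    split_ifs with h
    · rw [hupdate i h, VopTerm]
    · simp
  rw [VopTerm, VopTerm, ← hsnoc, ← hX, ← Finset.sum_congr rfl fun i _ => hcorr i, mul_assoc,
    ← mul_assoc (List.ofFn P).prod, hcomm]
  simp only [add_mul, mul_add, Finset.sum_mul, Finset.mul_sum, smul_mul_assoc, mul_smul_comm,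
    mul_assoc]

theorem sum_sum_VopTerm_snoc_eq_Vop (N : ℕ) {m : ℕ} (c d : Fin m → ℕ) (a b : ℕ) :
    ∑ e : Fin m → Fin N, ∑ f ∈ Finset.range N,
        VopTerm (Fin.snoc c a) (Fin.snoc d b) (Fin.snoc (fun i => (e i : ℕ)) f) =
      Vop N (Fin.snoc c a) (Fin.snoc d b) := by
  rw [Vop_eq_sum_VopTerm, ← (Fin.snocEquiv fun _ => Fin N).sum_comp, Fintype.sum_prod_type,
    Finset.sum_comm, ← Fin.sum_univ_eq_sum_range]
  refine Finset.sum_congr rfl fun f _ => Finset.sum_congr rfl fun e _ => ?_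
  congr 1
  exact (Fin.comp_snoc Fin.val e f).symm

theorem sum_sum_sum_ite_smul_VopTerm_eq (N : ℕ) {m : ℕ} (c d : Fin m → ℕ) (a b : ℕ) :
    ∑ e : Fin m → Fin N, ∑ f ∈ Finset.range N, ∑ i,
        (if (a, f) = (d i, (e i : ℕ)) then (1 : ℂ) else 0) •
          VopTerm c (Function.update d i b) (fun i => e i) =
      ∑ i, (if a = d i then (1 : ℂ) else 0) • Vop N c (Function.update d i b) := by
  have hδ : ∀ (e : Fin m → Fin N) i,
      ∑ f ∈ Finset.range N, (if (a, f) = (d i, (e i : ℕ)) then (1 : ℂ) else 0) =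
        if a = d i then 1 else 0 := by
    intro e i
    simp [ite_and, (e i).isLt]
  calc _ = ∑ e : Fin m → Fin N, ∑ i, (if a = d i then (1 : ℂ) else 0) •
          VopTerm c (Function.update d i b) (fun i => e i) := by
        refine Finset.sum_congr rfl fun e _ => ?_
        rw [Finset.sum_comm]
        simp only [← Finset.sum_smul, hδ]
    _ = _ := by
        rw [Finset.sum_comm]
        simp only [Vop_eq_sum_VopTerm, Finset.smul_sum]

/-- the mirror normal-ordering recursion for `V_N(c|d) ∘ D_N(a,b)`. -/
theorem Vop_comp_Dop (N m : ℕ) (a b : ℕ) (c d : Fin m → ℕ) :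
    Vop N c d ∘ₗ Dop N a b =
      Vop N (Fin.snoc c a) (Fin.snoc d b) +
        ∑ i : Fin m, (if a = d i then (1:ℂ) else 0) • Vop N c (Function.update d i b) := by
  rw [Vop_eq_sum_VopTerm N c d, Dop_eq_sum_mulLeft_X_mul_pderiv, ← Module.End.mul_eq_comp,
    Finset.sum_mul_sum]
  simp only [VopTerm_mul_mulLeft_X_mul_pderiv, Finset.sum_add_distrib]
  rw [sum_sum_VopTerm_snoc_eq_Vop, sum_sum_sum_ite_smul_VopTerm_eq]
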